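/- arXiv:math/0410346 — 2 statements merged into one kernel-verified Lean document; each statement's English description precedes it below -/
import Mathlib

section
/- Let K be a complete non-archimedean field with ring of integers R, and let f_1,...,f_n ∈ R[X_1,...,X_n] and a = (a_1,...,a_n) ∈ R^n satisfy |f_l(a)| < |det Jf(a)|^2 for all l, where Jf is the Jacobian matrix of the f_l. Then there exist unique b_1,...,b_n ∈ R with f_l(b) = 0 and |b_l - a_l| < |det Jf(a)| for all l. -/
/-!
Write `J(x)` for the Jacobian matrix of `f` at `x` and `δ = ‖det J(a)‖`. Integrality of the
coefficients gives a first-order Taylor formula with quadratic remainder,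
`‖f(y) - f(x) - J(x)(y - x)‖ ≤ ‖y - x‖²`, and `‖J(y) - J(x)‖ ≤ ‖y - x‖` entrywise; integrality
of the adjugate of `J(a)` gives `‖J(a)⁻¹ v‖ ≤ ‖v‖ / δ`. Hence the simplified Newton map
`x ↦ x - J(a)⁻¹ f(x)` is a `ρ / δ`-contraction on the ball of radius `ρ < δ` around `a`, and it maps
the ball of radius `‖f(a)‖ / δ < δ` into itself. Its fixed points are the zeros of `f`, so Banach's
fixed point theorem gives existence and the contraction estimate gives uniqueness.
-/
open MvPolynomial Matrix Metric

theorem IsUltrametricDist.norm_le_of_dist_le_of_norm_le {E : Type*} [SeminormedAddGroup E]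
    [IsUltrametricDist E] {x a : E} {r : ℝ} (hx : dist x a ≤ r) (ha : ‖a‖ ≤ r) : ‖x‖ ≤ r := by
  simpa using (dist_triangle_max x a 0).trans (max_le hx (by simpa using ha))

section UnitBall

variable (K : Type*) [SeminormedCommRing K] [NormOneClass K] [IsUltrametricDist K]

def unitBallSubring : Subring K where
  carrier := {x | ‖x‖ ≤ 1}
  mul_mem' {x y} hx hy := (norm_mul_le x y).trans (mul_le_one₀ hx (norm_nonneg y) hy)
  one_mem' := norm_one.le
  add_mem' {x y} hx hy := (IsUltrametricDist.norm_add_le_max x y).trans (max_le hx hy)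
  zero_mem' := by simp
  neg_mem' {x} hx := by simpa using hx

variable {K}

variable {n : Type*} [Fintype n] [DecidableEq n]

theorem Matrix.norm_det_le_one {A : Matrix n n K} (hA : ∀ i j, ‖A i j‖ ≤ 1) : ‖A.det‖ ≤ 1 := by
  let B : Matrix n n (unitBallSubring K) := .of fun i j => ⟨A i j, hA i j⟩
  have h : (unitBallSubring K).subtype B.det ∈ unitBallSubring K := B.det.prop
  rwa [RingHom.map_det] at h

theorem Matrix.norm_adjugate_apply_le_one {A : Matrix n n K} (hA : ∀ i j, ‖A i j‖ ≤ 1) (i j : n) :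
    ‖A.adjugate i j‖ ≤ 1 := by
  let B : Matrix n n (unitBallSubring K) := .of fun i j => ⟨A i j, hA i j⟩
  have h : (unitBallSubring K).subtype.mapMatrix B.adjugate i j ∈ unitBallSubring K :=
    (B.adjugate i j).prop
  rwa [RingHom.map_adjugate] at h

end UnitBall

theorem Matrix.norm_mulVec_le_of_forall_norm_le {K m n : Type*} [SeminormedRing K]
    [IsUltrametricDist K] [Fintype m] [Fintype n] {A : Matrix m n K} {C : ℝ} (hC : 0 ≤ C)
    (hA : ∀ i j, ‖A i j‖ ≤ C) (v : n → K) : ‖A *ᵥ v‖ ≤ C * ‖v‖ := by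
  refine (pi_norm_le_iff_of_nonneg (by positivity)).2 fun i => ?_
  refine IsUltrametricDist.norm_sum_le_of_forall_le_of_nonneg (by positivity) fun j _ => ?_
  exact (norm_mul_le _ _).trans (mul_le_mul (hA i j) (norm_le_pi_norm v j) (norm_nonneg _) hC)

theorem Matrix.norm_inv_mulVec_le {K n : Type*} [NormedField K] [IsUltrametricDist K]
    [Fintype n] [DecidableEq n] {A : Matrix n n K} (hA : ∀ i j, ‖A i j‖ ≤ 1) (v : n → K) :
    ‖A⁻¹ *ᵥ v‖ ≤ ‖v‖ / ‖A.det‖ := by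
  rw [div_eq_inv_mul]
  refine norm_mulVec_le_of_forall_norm_le (by positivity) (fun i j => ?_) v
  rw [Matrix.inv_def, Ring.inverse_eq_inv', Matrix.smul_apply, smul_eq_mul, norm_mul, norm_inv]
  exact mul_le_of_le_one_right (by positivity) (A.norm_adjugate_apply_le_one hA i j)

namespace MvPolynomial

section IntegralPolynomials

variable (σ K : Type*) [SeminormedCommRing K] [NormOneClass K] [IsUltrametricDist K]

noncomputable def integralPolynomials : Subring (MvPolynomial σ K) :=
  (map (unitBallSubring K).subtype).range

variable {σ K}

theorem mem_integralPolynomials_iff {p : MvPolynomial σ K} :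
    p ∈ integralPolynomials σ K ↔ ∀ d, ‖coeff d p‖ ≤ 1 := by
  rw [integralPolynomials, RingHom.mem_range, ← Set.mem_range, mem_range_map_iff_coeffs_subset,
    ← RingHom.coe_range, Subring.range_subtype]
  refine ⟨fun h d => ?_, fun h c hc => ?_⟩
  · by_cases hd : coeff d p = 0
    · simp [hd]
    · exact h (coeff_mem_coeffs d hd)
  · obtain ⟨d, -, rfl⟩ := mem_coeffs_iff.1 hc
    exact h d

theorem pderiv_mem_integralPolynomials {p : MvPolynomial σ K} (hp : p ∈ integralPolynomials σ K)
    (i : σ) : pderiv i p ∈ integralPolynomials σ K := by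
  obtain ⟨q, rfl⟩ := hp
  exact ⟨pderiv i q, pderiv_map.symm⟩

theorem norm_eval_le_one_of_mem_integralPolynomials {p : MvPolynomial σ K}
    (hp : p ∈ integralPolynomials σ K) {x : σ → K} (hx : ∀ i, ‖x i‖ ≤ 1) : ‖eval x p‖ ≤ 1 := by
  obtain ⟨q, rfl⟩ := hp
  let x' : σ → unitBallSubring K := fun i => ⟨x i, hx i⟩
  have h : (unitBallSubring K).subtype (eval x' q) ∈ unitBallSubring K := (eval x' q).prop
  rwa [map_eval] at h

variable [Fintype σ]

theorem norm_eval_add_sub_eval_le_and_norm_taylor_remainder_le {p : MvPolynomial σ K}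
    (hp : p ∈ integralPolynomials σ K) {x h : σ → K} (hx : ‖x‖ ≤ 1) (hh : ‖h‖ ≤ 1) :
    ‖eval (x + h) p - eval x p‖ ≤ ‖h‖ ∧
      ‖eval (x + h) p - eval x p - ∑ j, eval x (pderiv j p) * h j‖ ≤ ‖h‖ ^ 2 := by
  classical
  obtain ⟨q, rfl⟩ := hp
  -- The bounds are proved together: by the product rule, the remainder of `p * X i` involves the
  -- increment of `p`.
  induction q using MvPolynomial.induction_on with
  | C a => simp [sq, mul_nonneg]
  | add q₁ q₂ h₁ h₂ =>
    simp only [map_add, Finset.sum_add_distrib, add_mul]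
    constructor
    · rw [add_sub_add_comm]
      exact (IsUltrametricDist.norm_add_le_max _ _).trans (max_le h₁.1 h₂.1)
    · rw [add_sub_add_comm, add_sub_add_comm]
      exact (IsUltrametricDist.norm_add_le_max _ _).trans (max_le h₁.2 h₂.2)
  | mul_X q i ih =>
    set P := map (unitBallSubring K).subtype q
    have hPx : ‖eval x P‖ ≤ 1 :=
      norm_eval_le_one_of_mem_integralPolynomials ⟨q, rfl⟩ fun k => (norm_le_pi_norm x k).trans hx
    have hxi : ‖x i‖ ≤ 1 := (norm_le_pi_norm x i).trans hx
    have hhi : ‖h i‖ ≤ ‖h‖ := norm_le_pi_norm h i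
    have hxhi : ‖x i + h i‖ ≤ 1 :=
      (IsUltrametricDist.norm_add_le_max _ _).trans (max_le hxi (hhi.trans hh))
    have hinc : eval (x + h) (P * X i) - eval x (P * X i) =
        (eval (x + h) P - eval x P) * (x i + h i) + eval x P * h i := by
      simp only [eval_mul, eval_X, Pi.add_apply]; ring
    have hrem : eval (x + h) (P * X i) - eval x (P * X i) - ∑ j, eval x (pderiv j (P * X i)) * h j =
        (eval (x + h) P - eval x P - ∑ j, eval x (pderiv j P) * h j) * x i +
          (eval (x + h) P - eval x P) * h i := by
      simp only [pderiv_mul, pderiv_X, eval_add, eval_mul, eval_X, Pi.add_apply, add_mul,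
        Finset.sum_add_distrib, Pi.single_apply, apply_ite (eval x), map_zero, mul_ite,
        mul_one, mul_zero, ite_mul, zero_mul, Finset.sum_ite_eq, Finset.mem_univ, if_true]
      have hs : ∑ j, eval x (pderiv j P) * x i * h j = (∑ j, eval x (pderiv j P) * h j) * x i := by
        rw [Finset.sum_mul]
        exact Finset.sum_congr rfl fun _ _ => mul_right_comm _ _ _
      rw [hs]
      ring
    have hPX : map (unitBallSubring K).subtype (q * X i) = P * X i := by rw [map_mul, map_X]
    rw [hPX, hrem, hinc]
    refine ⟨(IsUltrametricDist.norm_add_le_max _ _).trans (max_le ?_ ?_),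
      (IsUltrametricDist.norm_add_le_max _ _).trans (max_le ?_ ?_)⟩
    · exact (norm_mul_le_of_le ih.1 hxhi).trans_eq (mul_one _)
    · exact (norm_mul_le_of_le hPx hhi).trans_eq (one_mul _)
    · exact (norm_mul_le_of_le ih.2 hxi).trans_eq (mul_one _)
    · exact (norm_mul_le_of_le ih.1 hhi).trans_eq (sq _).symm

end IntegralPolynomials

section Jacobian

variable {ι σ K : Type*}

noncomputable def jacobian [CommSemiring K] (f : ι → MvPolynomial σ K) (x : σ → K) : Matrix ι σ K :=
  .of fun i j => eval x (pderiv j (f i))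

theorem eval_det_eq_det_jacobian [CommRing K] [Fintype σ] [DecidableEq σ]
    (f : σ → MvPolynomial σ K) (x : σ → K) :
    eval x (Matrix.of fun i j => pderiv j (f i)).det = (jacobian f x).det :=
  RingHom.map_det (eval x) _

variable [SeminormedCommRing K] [NormOneClass K] [IsUltrametricDist K] [Fintype σ]
  {f : ι → MvPolynomial σ K} {x y : σ → K}

theorem norm_jacobian_apply_le_one (hf : ∀ i, f i ∈ integralPolynomials σ K) (hx : ‖x‖ ≤ 1)
    (i : ι) (j : σ) : ‖jacobian f x i j‖ ≤ 1 :=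
  norm_eval_le_one_of_mem_integralPolynomials (pderiv_mem_integralPolynomials (hf i) j)
    fun k => (norm_le_pi_norm x k).trans hx

theorem norm_jacobian_sub_jacobian_apply_le (hf : ∀ i, f i ∈ integralPolynomials σ K)
    (hx : ‖x‖ ≤ 1) (hyx : ‖y - x‖ ≤ 1) (i : ι) (j : σ) :
    ‖jacobian f y i j - jacobian f x i j‖ ≤ ‖y - x‖ := by
  simpa [jacobian] using (norm_eval_add_sub_eval_le_and_norm_taylor_remainder_le
    (pderiv_mem_integralPolynomials (hf i) j) hx hyx).1

theorem norm_eval_sub_eval_sub_jacobian_mulVec_le [Fintype ι]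
    (hf : ∀ i, f i ∈ integralPolynomials σ K) (hx : ‖x‖ ≤ 1) (hyx : ‖y - x‖ ≤ 1) :
    ‖((fun i => eval y (f i)) - fun i => eval x (f i)) - jacobian f x *ᵥ (y - x)‖ ≤
      ‖y - x‖ ^ 2 := by
  refine (pi_norm_le_iff_of_nonneg (by positivity)).2 fun i => ?_
  simpa [jacobian, mulVec, dotProduct] using
    (norm_eval_add_sub_eval_le_and_norm_taylor_remainder_le (hf i) hx hyx).2

end Jacobian

section SimplifiedNewton

variable {σ K : Type*} [NormedField K] [Fintype σ] [DecidableEq σ]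

noncomputable def simplifiedNewtonMap (f : σ → MvPolynomial σ K) (a x : σ → K) : σ → K :=
  x - (jacobian f a)⁻¹ *ᵥ fun i => eval x (f i)

variable {f : σ → MvPolynomial σ K} {a : σ → K}

theorem simplifiedNewtonMap_eq_self_iff (hdet : (jacobian f a).det ≠ 0) {x : σ → K} :
    simplifiedNewtonMap f a x = x ↔ (fun i => eval x (f i)) = 0 := by
  rw [simplifiedNewtonMap, sub_eq_self]
  refine ⟨fun h => ?_, fun h => by rw [h, mulVec_zero]⟩
  simpa [mulVec_mulVec, mul_nonsing_inv _ (Ne.isUnit hdet)] using congrArg (jacobian f a *ᵥ ·) h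

theorem simplifiedNewtonMap_sub_simplifiedNewtonMap (hdet : (jacobian f a).det ≠ 0)
    (y z : σ → K) :
    simplifiedNewtonMap f a y - simplifiedNewtonMap f a z =
      -((jacobian f a)⁻¹ *ᵥ
        (((fun i => eval y (f i)) - fun i => eval z (f i)) - jacobian f a *ᵥ (y - z))) := by
  rw [mulVec_sub, mulVec_mulVec, nonsing_inv_mul _ (Ne.isUnit hdet), one_mulVec,
    simplifiedNewtonMap, simplifiedNewtonMap, mulVec_sub]
  abel

variable [IsUltrametricDist K]

theorem dist_simplifiedNewtonMap_le (hf : ∀ i, f i ∈ integralPolynomials σ K) (ha : ‖a‖ ≤ 1)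
    (hdet : (jacobian f a).det ≠ 0) {ρ : ℝ} (hρ : ρ ≤ 1) {y z : σ → K} (hy : dist y a ≤ ρ)
    (hz : dist z a ≤ ρ) :
    dist (simplifiedNewtonMap f a y) (simplifiedNewtonMap f a z) ≤
      ρ / ‖(jacobian f a).det‖ * dist y z := by
  have hρ0 : 0 ≤ ρ := dist_nonneg.trans hz
  have hz1 : ‖z‖ ≤ 1 := IsUltrametricDist.norm_le_of_dist_le_of_norm_le (hz.trans hρ) ha
  rw [dist_eq_norm z a] at hz
  have hyz : ‖y - z‖ ≤ ρ := by
    rw [← dist_eq_norm]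
    exact (dist_triangle_max y a z).trans (max_le hy (by rwa [dist_comm, dist_eq_norm]))
  have hlin : ((fun i => eval y (f i)) - fun i => eval z (f i)) - jacobian f a *ᵥ (y - z) =
      (((fun i => eval y (f i)) - fun i => eval z (f i)) - jacobian f z *ᵥ (y - z)) +
        (jacobian f z - jacobian f a) *ᵥ (y - z) := by
    rw [sub_mulVec]; abel
  have hbound : ‖((fun i => eval y (f i)) - fun i => eval z (f i)) - jacobian f a *ᵥ (y - z)‖ ≤
      ρ * ‖y - z‖ := by
    rw [hlin]
    refine (IsUltrametricDist.norm_add_le_max _ _).trans (max_le ?_ ?_)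
    · exact (norm_eval_sub_eval_sub_jacobian_mulVec_le hf hz1 (hyz.trans hρ)).trans
        (by rw [sq]; gcongr)
    · refine norm_mulVec_le_of_forall_norm_le hρ0 (fun i j => ?_) _
      exact (norm_jacobian_sub_jacobian_apply_le hf ha (hz.trans hρ) i j).trans hz
  rw [dist_eq_norm, simplifiedNewtonMap_sub_simplifiedNewtonMap hdet, norm_neg, dist_eq_norm]
  calc _ ≤ _ / ‖(jacobian f a).det‖ := norm_inv_mulVec_le (norm_jacobian_apply_le_one hf ha) _
    _ ≤ ρ * ‖y - z‖ / ‖(jacobian f a).det‖ := by gcongr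
    _ = _ := by ring

theorem mapsTo_simplifiedNewtonMap_closedBall (hf : ∀ i, f i ∈ integralPolynomials σ K)
    (ha : ‖a‖ ≤ 1) (hdet : (jacobian f a).det ≠ 0) {ρ : ℝ} (hρ : ρ ≤ ‖(jacobian f a).det‖)
    (hfa : ‖fun i => eval a (f i)‖ ≤ ‖(jacobian f a).det‖ * ρ) :
    Set.MapsTo (simplifiedNewtonMap f a) (closedBall a ρ) (closedBall a ρ) := by
  intro x hx
  rw [mem_closedBall] at hx ⊢
  have hδ : 0 < ‖(jacobian f a).det‖ := norm_pos_iff.2 hdet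
  have hρ1 : ρ ≤ 1 := hρ.trans (norm_det_le_one (norm_jacobian_apply_le_one hf ha))
  have hstep : dist (simplifiedNewtonMap f a a) a ≤ ρ := by
    rw [dist_eq_norm, simplifiedNewtonMap, sub_sub_cancel_left, norm_neg]
    refine (norm_inv_mulVec_le (norm_jacobian_apply_le_one hf ha) _).trans ?_
    rwa [div_le_iff₀' hδ]
  have hcontract :=
    dist_simplifiedNewtonMap_le hf ha hdet hρ1 hx ((dist_self a).trans_le (dist_nonneg.trans hx))
  refine (dist_triangle_max _ (simplifiedNewtonMap f a a) a).trans (max_le ?_ hstep)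
  calc _ ≤ ρ / ‖(jacobian f a).det‖ * dist x a := hcontract
    _ ≤ 1 * ρ := by gcongr; exact (div_le_one hδ).2 hρ
    _ = ρ := one_mul ρ

theorem exists_eval_eq_zero_dist_le [CompleteSpace K] (hf : ∀ i, f i ∈ integralPolynomials σ K)
    (ha : ‖a‖ ≤ 1) (h : ‖fun i => eval a (f i)‖ < ‖(jacobian f a).det‖ ^ 2) :
    ∃ b, (fun i => eval b (f i)) = 0 ∧
      dist b a ≤ ‖fun i => eval a (f i)‖ / ‖(jacobian f a).det‖ := by
  set δ := ‖(jacobian f a).det‖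
  set ρ := ‖fun i => eval a (f i)‖ / δ
  have hδ : 0 < δ :=
    lt_of_pow_lt_pow_left₀ 2 (norm_nonneg _) (by simpa using h.trans_le' (norm_nonneg _))
  have hδ1 : δ ≤ 1 := norm_det_le_one (norm_jacobian_apply_le_one hf ha)
  have hdet : (jacobian f a).det ≠ 0 := norm_pos_iff.1 hδ
  have hρδ : ρ < δ := by rwa [div_lt_iff₀ hδ, ← sq]
  have hρ0 : 0 ≤ ρ := by positivity
  have hmaps := mapsTo_simplifiedNewtonMap_closedBall hf ha hdet hρδ.le
    (by rw [mul_div_cancel₀ _ hδ.ne'])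
  have hcontr : ContractingWith (ρ / δ).toNNReal (hmaps.restrict _ _ _) := by
    refine ⟨Real.toNNReal_lt_one.2 ((div_lt_one hδ).2 hρδ), .of_dist_le_mul fun y z => ?_⟩
    rw [Real.coe_toNNReal _ (by positivity)]
    exact dist_simplifiedNewtonMap_le hf ha hdet (hρδ.le.trans hδ1) y.2 z.2
  obtain ⟨b, hb, hfix, -⟩ := hcontr.exists_fixedPoint' isClosed_closedBall.isComplete hmaps
    (mem_closedBall_self hρ0) (edist_ne_top _ _)
  exact ⟨b, (simplifiedNewtonMap_eq_self_iff hdet).1 hfix, hb⟩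

theorem eq_of_eval_eq_zero_of_dist_lt (hf : ∀ i, f i ∈ integralPolynomials σ K) (ha : ‖a‖ ≤ 1)
    {y z : σ → K} (hy : (fun i => eval y (f i)) = 0) (hz : (fun i => eval z (f i)) = 0)
    (hya : dist y a < ‖(jacobian f a).det‖) (hza : dist z a < ‖(jacobian f a).det‖) : y = z := by
  set δ := ‖(jacobian f a).det‖
  have hδ : 0 < δ := dist_nonneg.trans_lt hya
  have hdet : (jacobian f a).det ≠ 0 := norm_pos_iff.1 hδ
  have hδ1 : δ ≤ 1 := norm_det_le_one (norm_jacobian_apply_le_one hf ha)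
  have hρδ : max (dist y a) (dist z a) < δ := max_lt hya hza
  have hcontract := dist_simplifiedNewtonMap_le hf ha hdet (hρδ.le.trans hδ1) (le_max_left _ _)
    (le_max_right _ _)
  rw [(simplifiedNewtonMap_eq_self_iff hdet).2 hy, (simplifiedNewtonMap_eq_self_iff hdet).2 hz]
    at hcontract
  have hq : max (dist y a) (dist z a) / δ < 1 := (div_lt_one hδ).2 hρδ
  rw [← dist_le_zero]
  nlinarith [dist_nonneg (x := y) (y := z)]

end SimplifiedNewton

end MvPolynomial

/-- Multivariate Hensel's Lemma: for a complete non-archimedean field `K` with ring of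
integers `R = {x : ‖x‖ ≤ 1}`, polynomials `f₁,…,fₙ` over `R` and `a ∈ Rⁿ` with
`‖fₗ(a)‖ < ‖det Jf(a)‖²` for all `l`, there is a unique `b ∈ Rⁿ` with `fₗ(b) = 0`
and `‖bₗ - aₗ‖ < ‖det Jf(a)‖` for all `l`. -/
theorem stmt2 (K : Type) [NormedField K] [CompleteSpace K]
    (hna : ∀ x y : K, ‖x + y‖ ≤ max ‖x‖ ‖y‖)
    (n : ℕ) (f : Fin n → MvPolynomial (Fin n) K)
    (hf : ∀ l d, ‖coeff d (f l)‖ ≤ 1)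
    (a : Fin n → K) (ha : ∀ i, ‖a i‖ ≤ 1)
    (h : ∀ l, ‖eval a (f l)‖ <
      ‖eval a (Matrix.det (Matrix.of fun i j => pderiv j (f i)))‖ ^ 2) :
    ∃! b : Fin n → K, (∀ i, ‖b i‖ ≤ 1) ∧ (∀ l, eval b (f l) = 0) ∧
      ∀ l, ‖b l - a l‖ < ‖eval a (Matrix.det (Matrix.of fun i j => pderiv j (f i)))‖ := by
  have : IsUltrametricDist K := .isUltrametricDist_of_forall_norm_add_le_max_norm hna
  have hf' : ∀ l, f l ∈ integralPolynomials (Fin n) K :=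
    fun l => mem_integralPolynomials_iff.2 (hf l)
  have ha' : ‖a‖ ≤ 1 := (pi_norm_le_iff_of_nonneg zero_le_one).2 ha
  simp only [eval_det_eq_det_jacobian] at h ⊢
  set δ := ‖(jacobian f a).det‖
  have hδ : 0 < δ := by
    rcases isEmpty_or_nonempty (Fin n) with hn | ⟨⟨l⟩⟩
    · simp [δ, Matrix.det_isEmpty]
    · exact lt_of_pow_lt_pow_left₀ 2 (norm_nonneg _)
        (by simpa using (h l).trans_le' (norm_nonneg _))
  have hδ1 : δ ≤ 1 := norm_det_le_one (norm_jacobian_apply_le_one hf' ha')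
  have hdist (x : Fin n → K) : dist x a < δ ↔ ∀ l, ‖x l - a l‖ < δ := by
    rw [dist_eq_norm, pi_norm_lt_iff hδ]; rfl
  have hfa : ‖fun l => eval a (f l)‖ < δ ^ 2 := (pi_norm_lt_iff (by positivity)).2 h
  obtain ⟨b, hb, hba⟩ := exists_eval_eq_zero_dist_le hf' ha' hfa
  have hbδ : dist b a < δ := hba.trans_lt ((div_lt_iff₀ hδ).2 (by rwa [← sq]))
  have hb1 : ‖b‖ ≤ 1 := IsUltrametricDist.norm_le_of_dist_le_of_norm_le (hbδ.le.trans hδ1) ha'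
  refine ⟨b, ⟨fun i => (norm_le_pi_norm b i).trans hb1, congrFun hb, (hdist b).1 hbδ⟩, ?_⟩
  rintro y ⟨-, hy, hya⟩
  exact eq_of_eval_eq_zero_of_dist_lt hf' ha' (funext hy) hb ((hdist y).2 hya) hbδ
end

section
/- Let K be a complete non-archimedean field with ring of integers R, f_1,...,f_n ∈ R[X_1,...,X_n], and a ∈ R^n with |det Jf(a)| = δ > 0 and |f_l(a)| < δ^2 for all l. Then for every b ∈ R^n with |b_l - a_l| < δ for all l, one has |det Jf(b)| = δ. -/
open MvPolynomial IsUltrametricDist Finset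

section aux

variable {K : Type} [NormedField K] [IsUltrametricDist K] {n : ℕ}

lemma aux_coeff_sum_bound {ι : Type*} (s : Finset ι) (g : ι → MvPolynomial (Fin n) K)
    (h : ∀ i ∈ s, ∀ e, ‖coeff e (g i)‖ ≤ 1) (e : Fin n →₀ ℕ) :
    ‖coeff e (∑ i ∈ s, g i)‖ ≤ 1 := by
  rw [coeff_sum]
  exact norm_sum_le_of_forall_le_of_nonneg zero_le_one (fun i hi => h i hi e)

lemma aux_coeff_mul_bound (p q : MvPolynomial (Fin n) K)
    (hp : ∀ e, ‖coeff e p‖ ≤ 1) (hq : ∀ e, ‖coeff e q‖ ≤ 1) (e : Fin n →₀ ℕ) :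
    ‖coeff e (p * q)‖ ≤ 1 := by
  rw [coeff_mul]
  refine norm_sum_le_of_forall_le_of_nonneg zero_le_one (fun x _ => ?_)
  calc ‖coeff x.1 p * coeff x.2 q‖ ≤ ‖coeff x.1 p‖ * ‖coeff x.2 q‖ := norm_mul_le _ _
    _ ≤ 1 * 1 := mul_le_mul (hp _) (hq _) (norm_nonneg _) zero_le_one
    _ = 1 := mul_one 1

lemma aux_coeff_prod_bound {ι : Type*} (s : Finset ι) (g : ι → MvPolynomial (Fin n) K)
    (h : ∀ i ∈ s, ∀ e, ‖coeff e (g i)‖ ≤ 1) (e : Fin n →₀ ℕ) :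
    ‖coeff e (∏ i ∈ s, g i)‖ ≤ 1 := by
  induction s using Finset.cons_induction generalizing e with
  | empty =>
    simp only [Finset.prod_empty]
    rw [MvPolynomial.coeff_one]
    split <;> simp
  | cons j s hj ih =>
    rw [Finset.prod_cons]
    exact aux_coeff_mul_bound _ _ (h j (Finset.mem_cons_self _ _))
      (ih (fun i hi => h i (Finset.mem_cons_of_mem hi))) e

lemma aux_coeff_pderiv_bound (p : MvPolynomial (Fin n) K)
    (hp : ∀ e, ‖coeff e p‖ ≤ 1) (j : Fin n) (e : Fin n →₀ ℕ) :
    ‖coeff e (pderiv j p)‖ ≤ 1 := by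
  conv_lhs => rw [p.as_sum, map_sum]
  refine aux_coeff_sum_bound _ _ (fun d _ e' => ?_) e
  rw [pderiv_monomial]
  rw [coeff_monomial]
  split
  · calc ‖coeff d p * (d j : K)‖ ≤ ‖coeff d p‖ * ‖(d j : K)‖ := norm_mul_le _ _
      _ ≤ 1 * 1 := mul_le_mul (hp _) (norm_natCast_le_one K _) (norm_nonneg _) zero_le_one
      _ = 1 := mul_one 1
  · simp

lemma aux_coeff_det_bound (f : Fin n → MvPolynomial (Fin n) K)
    (hf : ∀ l d, ‖coeff d (f l)‖ ≤ 1) (e : Fin n →₀ ℕ) :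
    ‖coeff e (Matrix.det (Matrix.of fun i j => pderiv j (f i)))‖ ≤ 1 := by
  rw [Matrix.det_apply]
  refine aux_coeff_sum_bound _ _ (fun σ _ e' => ?_) e
  have h1 : ∀ e'', ‖coeff e'' (∏ i, pderiv i (f (σ i)))‖ ≤ 1 := by
    intro e''
    exact aux_coeff_prod_bound Finset.univ (fun i => pderiv i (f (σ i)))
      (fun i _ e3 => aux_coeff_pderiv_bound _ (hf (σ i)) i e3) e''
  rcases Int.units_eq_one_or (Equiv.Perm.sign σ) with hs | hs <;>
    simp [hs, h1 e']

lemma aux_prod_sub_prod {ι : Type*} (s : Finset ι) (x y : ι → K) (ε : ℝ) (hε : 0 ≤ ε)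
    (hx : ∀ i ∈ s, ‖x i‖ ≤ 1) (hy : ∀ i ∈ s, ‖y i‖ ≤ 1)
    (hxy : ∀ i ∈ s, ‖x i - y i‖ ≤ ε) :
    ‖∏ i ∈ s, x i - ∏ i ∈ s, y i‖ ≤ ε := by
  induction s using Finset.cons_induction with
  | empty => simpa using hε
  | cons j s hj ih =>
    rw [Finset.prod_cons, Finset.prod_cons]
    have key : x j * ∏ i ∈ s, x i - y j * ∏ i ∈ s, y i
        = x j * (∏ i ∈ s, x i - ∏ i ∈ s, y i) + (x j - y j) * ∏ i ∈ s, y i := by ring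
    rw [key]
    refine le_trans (norm_add_le_max _ _) (max_le ?_ ?_)
    · calc ‖x j * (∏ i ∈ s, x i - ∏ i ∈ s, y i)‖
          ≤ ‖x j‖ * ‖∏ i ∈ s, x i - ∏ i ∈ s, y i‖ := norm_mul_le _ _
        _ ≤ 1 * ε := mul_le_mul (hx j (mem_cons_self _ _))
            (ih (fun i hi => hx i (mem_cons_of_mem hi))
              (fun i hi => hy i (mem_cons_of_mem hi))
              (fun i hi => hxy i (mem_cons_of_mem hi)))
            (norm_nonneg _) zero_le_one
        _ = ε := one_mul ε
    · have hyp : ‖∏ i ∈ s, y i‖ ≤ 1 := by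
        rw [norm_prod]
        exact Finset.prod_le_one (fun i _ => norm_nonneg _)
          (fun i hi => hy i (mem_cons_of_mem hi))
      calc ‖(x j - y j) * ∏ i ∈ s, y i‖ ≤ ‖x j - y j‖ * ‖∏ i ∈ s, y i‖ := norm_mul_le _ _
        _ ≤ ε * 1 := mul_le_mul (hxy j (mem_cons_self _ _)) hyp (norm_nonneg _) hε
        _ = ε := mul_one ε

lemma aux_pow_sub_pow (x y : K) (m : ℕ) (ε : ℝ) (hε : 0 ≤ ε)
    (hx : ‖x‖ ≤ 1) (hy : ‖y‖ ≤ 1) (hxy : ‖x - y‖ ≤ ε) :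
    ‖x ^ m - y ^ m‖ ≤ ε := by
  have := aux_prod_sub_prod (Finset.range m) (fun _ => x) (fun _ => y) ε hε
    (fun _ _ => hx) (fun _ _ => hy) (fun _ _ => hxy)
  simpa using this

lemma aux_eval_sub_bound (g : MvPolynomial (Fin n) K)
    (hg : ∀ e, ‖coeff e g‖ ≤ 1) (a b : Fin n → K)
    (ha : ∀ i, ‖a i‖ ≤ 1) (hb : ∀ i, ‖b i‖ ≤ 1) (ε : ℝ) (hε : 0 ≤ ε)
    (hab : ∀ i, ‖b i - a i‖ ≤ ε) :
    ‖eval b g - eval a g‖ ≤ ε := by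
  rw [eval_eq b g, eval_eq a g, ← Finset.sum_sub_distrib]
  refine norm_sum_le_of_forall_le_of_nonneg hε (fun d _ => ?_)
  rw [← mul_sub]
  calc ‖coeff d g * ((∏ i ∈ d.support, b i ^ d i) - ∏ i ∈ d.support, a i ^ d i)‖
      ≤ ‖coeff d g‖ * ‖(∏ i ∈ d.support, b i ^ d i) - ∏ i ∈ d.support, a i ^ d i‖ :=
        norm_mul_le _ _
    _ ≤ 1 * ε := mul_le_mul (hg d)
        (aux_prod_sub_prod _ _ _ ε hε
          (fun i _ => by simpa using pow_le_one₀ (norm_nonneg _) (hb i))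
          (fun i _ => by simpa using pow_le_one₀ (norm_nonneg _) (ha i))
          (fun i _ => aux_pow_sub_pow _ _ _ ε hε (hb i) (ha i) (hab i)))
        (norm_nonneg _) zero_le_one
    _ = ε := one_mul ε

end aux

/-- Local constancy of the Jacobian determinant: for a complete non-archimedean field `K`
with ring of integers `R`, polynomials `f₁,…,fₙ` over `R` and `a ∈ Rⁿ` with
`δ = ‖det Jf(a)‖ > 0` and `‖fₗ(a)‖ < δ²` for all `l`, every `b ∈ Rⁿ` with
`‖bₗ - aₗ‖ < δ` for all `l` satisfies `‖det Jf(b)‖ = δ`. -/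
theorem stmt4 (K : Type) [NormedField K] [CompleteSpace K]
    (hna : ∀ x y : K, ‖x + y‖ ≤ max ‖x‖ ‖y‖)
    (n : ℕ) (f : Fin n → MvPolynomial (Fin n) K)
    (hf : ∀ l d, ‖coeff d (f l)‖ ≤ 1)
    (a : Fin n → K) (ha : ∀ i, ‖a i‖ ≤ 1)
    (δ : ℝ) (hδ : δ = ‖eval a (Matrix.det (Matrix.of fun i j => pderiv j (f i)))‖)
    (hδpos : 0 < δ) (h : ∀ l, ‖eval a (f l)‖ < δ ^ 2) :
    ∀ b : Fin n → K, (∀ i, ‖b i‖ ≤ 1) → (∀ l, ‖b l - a l‖ < δ) →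
      ‖eval b (Matrix.det (Matrix.of fun i j => pderiv j (f i)))‖ = δ := by
  haveI : IsUltrametricDist K := isUltrametricDist_of_forall_norm_add_le_max_norm hna
  intro b hb hba
  set g := Matrix.det (Matrix.of fun i j => pderiv j (f i)) with hg
  obtain ⟨ε, hεnn, hεδ, hεb⟩ : ∃ ε : ℝ, 0 ≤ ε ∧ ε < δ ∧ ∀ i, ‖b i - a i‖ ≤ ε := by
    refine ⟨((Finset.univ.sup fun i => ‖b i - a i‖₊ : NNReal) : ℝ), NNReal.coe_nonneg _, ?_, ?_⟩
    · have hsup : (Finset.univ.sup fun i => ‖b i - a i‖₊) < δ.toNNReal := by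
        rw [Finset.sup_lt_iff (by simpa using hδpos)]
        intro i _
        rw [← NNReal.coe_lt_coe, coe_nnnorm, Real.coe_toNNReal _ hδpos.le]
        exact hba i
      calc ((Finset.univ.sup fun i => ‖b i - a i‖₊ : NNReal) : ℝ)
          < (δ.toNNReal : ℝ) := NNReal.coe_lt_coe.mpr hsup
        _ = δ := Real.coe_toNNReal _ hδpos.le
    · intro i
      have := Finset.le_sup (f := fun i => ‖b i - a i‖₊) (Finset.mem_univ i)
      exact_mod_cast this
  have hdiff : ‖eval b g - eval a g‖ ≤ ε :=
    aux_eval_sub_bound g (aux_coeff_det_bound f hf) a b ha hb ε hεnn hεb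
  have hlt : ‖eval b g - eval a g‖ < ‖eval a g‖ := lt_of_le_of_lt hdiff (hδ ▸ hεδ)
  have heq : eval b g = eval a g + (eval b g - eval a g) := by ring
  rw [heq, hδ, norm_add_eq_max_of_norm_ne_norm (ne_of_gt hlt)]
  exact max_eq_left hlt.le
end
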